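/- arXiv:1902.03918 — 3 statements merged into one kernel-verified Lean document; each statement's English description precedes it below -/
import Mathlib

section
/- If ξ′ξ″ − ξξ‴ ≡ 0 and h′h″ − hh‴ ≡ 0 on the domain, then the charged-Nariai-type metric is locally symmetric: the covariant derivative of its Riemann curvature tensor with respect to the Levi-Civita connection of g vanishes, ∇R = 0. -/
noncomputable section

open Real

/-- Partial derivative of `f` in the `i`-th coordinate direction at the point `x`. -/
def pd (i : Fin 4) (f : (Fin 4 → ℝ) → ℝ) (x : Fin 4 → ℝ) : ℝ :=
  deriv (fun s => f (Function.update x i s)) (x i)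

/-- The charged-Nariai-type metric: coordinates `x 0 = t`, `x 1 = r`, `x 2 = θ`, `x 3 = φ`;
nonzero components `g₁₁ = -(r₀²/L₀) ξ(r)²`, `g₂₂ = r₀²/L₀`, `g₃₃ = r₀²`, `g₄₄ = r₀² h(θ)²`. -/
def gT (r0 L0 : ℝ) (ξ h : ℝ → ℝ) (x : Fin 4 → ℝ) : Fin 4 → Fin 4 → ℝ := fun p q =>
  if p = 0 ∧ q = 0 then -(r0 ^ 2 / L0) * ξ (x 1) ^ 2
  else if p = 1 ∧ q = 1 then r0 ^ 2 / L0
  else if p = 2 ∧ q = 2 then r0 ^ 2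
  else if p = 3 ∧ q = 3 then r0 ^ 2 * h (x 2) ^ 2
  else 0

/-- Inverse of a diagonal metric. -/
def ginv (g : (Fin 4 → ℝ) → Fin 4 → Fin 4 → ℝ) (x : Fin 4 → ℝ) : Fin 4 → Fin 4 → ℝ :=
  fun p q => if p = q then (g x p p)⁻¹ else 0

/-- Christoffel symbols `Γ^a_{bc}` of the Levi-Civita connection of a diagonal metric. -/
def Chr (g : (Fin 4 → ℝ) → Fin 4 → Fin 4 → ℝ) (x : Fin 4 → ℝ) (a b c : Fin 4) : ℝ :=
  (1 / 2) * ∑ d : Fin 4, ginv g x a d *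
    (pd b (fun y => g y d c) x + pd c (fun y => g y d b) x - pd d (fun y => g y b c) x)

/-- Covariant derivative `∇_a T_{pq}` of a (0,2)-tensor field. -/
def covDeriv2 (g T : (Fin 4 → ℝ) → Fin 4 → Fin 4 → ℝ) (x : Fin 4 → ℝ) (a p q : Fin 4) : ℝ :=
  pd a (fun y => T y p q) x
    - ∑ e : Fin 4, Chr g x e a p * T x e q
    - ∑ e : Fin 4, Chr g x e a q * T x p e

/-- Covariant derivative `∇_a T_{pqrs}` of a (0,4)-tensor field. -/
def covDeriv4 (g : (Fin 4 → ℝ) → Fin 4 → Fin 4 → ℝ)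
    (T : (Fin 4 → ℝ) → Fin 4 → Fin 4 → Fin 4 → Fin 4 → ℝ)
    (x : Fin 4 → ℝ) (a p q r s : Fin 4) : ℝ :=
  pd a (fun y => T y p q r s) x
    - ∑ e : Fin 4, Chr g x e a p * T x e q r s
    - ∑ e : Fin 4, Chr g x e a q * T x p e r s
    - ∑ e : Fin 4, Chr g x e a r * T x p q e s
    - ∑ e : Fin 4, Chr g x e a s * T x p q r e

/-- Elementary (0,4)-tensor with the usual Riemann symmetries, supported on the
coordinate plane `(a,b)` and normalized so that its `(a,b,a,b)` component is `1`. -/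
def blk (a b : Fin 4) (p q r s : Fin 4) : ℝ :=
  (if p = a ∧ q = b then (1 : ℝ) else if p = b ∧ q = a then -1 else 0) *
  (if r = a ∧ s = b then (1 : ℝ) else if r = b ∧ s = a then -1 else 0)

/-- The (0,4) Riemann curvature tensor of the charged-Nariai-type metric:
`R₁₂₁₂ = -(r₀²/L₀) ξ ξ″`, `R₃₄₃₄ = r₀² h h″` (up to the Riemann symmetries). -/
def RT (r0 L0 : ℝ) (ξ h : ℝ → ℝ) (x : Fin 4 → ℝ) (p q r s : Fin 4) : ℝ :=
  (-(r0 ^ 2 / L0) * ξ (x 1) * deriv (deriv ξ) (x 1)) * blk 0 1 p q r s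
    + (r0 ^ 2 * h (x 2) * deriv (deriv h) (x 2)) * blk 2 3 p q r s

/-- The Ricci tensor of the charged-Nariai-type metric:
`S₁₁ = -ξξ″`, `S₂₂ = ξ″/ξ`, `S₃₃ = h″/h`, `S₄₄ = hh″`. -/
def SRicT (ξ h : ℝ → ℝ) (x : Fin 4 → ℝ) : Fin 4 → Fin 4 → ℝ := fun p q =>
  if p = 0 ∧ q = 0 then -(ξ (x 1) * deriv (deriv ξ) (x 1))
  else if p = 1 ∧ q = 1 then deriv (deriv ξ) (x 1) / ξ (x 1)
  else if p = 2 ∧ q = 2 then deriv (deriv h) (x 2) / h (x 2)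
  else if p = 3 ∧ q = 3 then h (x 2) * deriv (deriv h) (x 2)
  else 0

/-- The scalar curvature of the charged-Nariai-type metric:
`κ = 2(L₀hξ″ + ξh″)/(r₀²ξh)`. -/
def κT (r0 L0 : ℝ) (ξ h : ℝ → ℝ) (x : Fin 4 → ℝ) : ℝ :=
  2 * (L0 * h (x 2) * deriv (deriv ξ) (x 1) + ξ (x 1) * deriv (deriv h) (x 2)) /
    (r0 ^ 2 * ξ (x 1) * h (x 2))

/-- Kulkarni–Nomizu product of two symmetric (0,2)-tensors. -/
def KN (E A : Fin 4 → Fin 4 → ℝ) (p q r s : Fin 4) : ℝ :=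
  E p s * A q r - E p r * A q s + E q r * A p s - E q s * A p r

/-- The (0,4) Weyl conformal curvature tensor of the charged-Nariai-type metric. -/
def CT (r0 L0 : ℝ) (ξ h : ℝ → ℝ) (x : Fin 4 → ℝ) (p q r s : Fin 4) : ℝ :=
  RT r0 L0 ξ h x p q r s
    + (1 / 2) * (gT r0 L0 ξ h x p s * SRicT ξ h x q r - gT r0 L0 ξ h x q s * SRicT ξ h x p r
        + SRicT ξ h x p s * gT r0 L0 ξ h x q r - SRicT ξ h x q s * gT r0 L0 ξ h x p r)
    - (κT r0 L0 ξ h x / 6) * (gT r0 L0 ξ h x p s * gT r0 L0 ξ h x q r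
        - gT r0 L0 ξ h x q s * gT r0 L0 ξ h x p r)

/-- The (0,4) projective curvature tensor of the charged-Nariai-type metric (n = 4). -/
def PT (r0 L0 : ℝ) (ξ h : ℝ → ℝ) (x : Fin 4 → ℝ) (p q r s : Fin 4) : ℝ :=
  RT r0 L0 ξ h x p q r s
    + (1 / 3) * (gT r0 L0 ξ h x p s * SRicT ξ h x q r - gT r0 L0 ξ h x q s * SRicT ξ h x p r)

/-- The (0,6)-tensor `(U·T)_{pqrs,uv}` built from two (0,4)-tensor fields. -/
def dot4 (g : (Fin 4 → ℝ) → Fin 4 → Fin 4 → ℝ)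
    (U T : (Fin 4 → ℝ) → Fin 4 → Fin 4 → Fin 4 → Fin 4 → ℝ)
    (x : Fin 4 → ℝ) (p q r s u v : Fin 4) : ℝ :=
  - ∑ α : Fin 4, ∑ β : Fin 4, ginv g x α β *
      (U x u v p β * T x α q r s + U x u v q β * T x p α r s
        + U x u v r β * T x p q α s + U x u v s β * T x p q r α)

/-- The Tachibana tensor `Q(Z,T)_{pqrs,uv}`. -/
def Qop (Z : Fin 4 → Fin 4 → ℝ) (T : Fin 4 → Fin 4 → Fin 4 → Fin 4 → ℝ)
    (p q r s u v : Fin 4) : ℝ :=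
  Z v p * T u q r s + Z v q * T p u r s + Z v r * T p q u s + Z v s * T p q r u
    - Z u p * T v q r s - Z u q * T p v r s - Z u r * T p q v s - Z u s * T p q r v

/-- The Ricci operator `S^t_p = g^{tα} S_{αp}` of a metric `g` with Ricci tensor `S`. -/
def Sop (g S : (Fin 4 → ℝ) → Fin 4 → Fin 4 → ℝ) (x : Fin 4 → ℝ) (t p : Fin 4) : ℝ :=
  ∑ a : Fin 4, ginv g x t a * S x a p

/-- `ω(f) = f′f″ - ff‴`. -/
def omg (f : ℝ → ℝ) (t : ℝ) : ℝ :=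
  deriv f t * deriv (deriv f) t - f t * deriv (deriv (deriv f)) t

/-- `Ω = L₀hξ″ - ξh″`. -/
def ΩT (L0 : ℝ) (ξ h : ℝ → ℝ) (x : Fin 4 → ℝ) : ℝ :=
  L0 * h (x 2) * deriv (deriv ξ) (x 1) - ξ (x 1) * deriv (deriv h) (x 2)

open scoped ContDiff

lemma pd_const (i : Fin 4) (c : ℝ) (x : Fin 4 → ℝ) : pd i (fun _ => c) x = 0 := by
  simp [pd]

lemma pd_comp (i j : Fin 4) (F : ℝ → ℝ) (x : Fin 4 → ℝ) :
    pd i (fun y => F (y j)) x = if i = j then deriv F (x j) else 0 := by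
  rcases eq_or_ne i j with rfl | hij
  · simp [pd]
  · rw [if_neg hij]
    have : (fun s => F (Function.update x i s j)) = fun _ => F (x j) := by
      funext s; rw [Function.update_of_ne hij.symm]
    rw [pd, this, deriv_const]

lemma smooth_deriv {f : ℝ → ℝ} (hf : ContDiff ℝ ∞ f) : ContDiff ℝ ∞ (deriv f) :=
  (contDiff_infty_iff_deriv.mp hf).2

lemma smooth_diff {f : ℝ → ℝ} (hf : ContDiff ℝ ∞ f) (t : ℝ) : DifferentiableAt ℝ f t :=
  (contDiff_infty_iff_deriv.mp hf).1 t

lemma deriv_sq (c : ℝ) {f : ℝ → ℝ} (hf : ContDiff ℝ ∞ f) (t : ℝ) :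
    deriv (fun u => c * f u ^ 2) t = c * (2 * f t * deriv f t) := by
  rw [deriv_const_mul (d := fun u => f u ^ 2) _ ((smooth_diff hf t).pow 2), deriv_fun_pow' (smooth_diff hf t)]
  simp only [Finset.sum_range_succ, Finset.sum_range_zero, Nat.pred_eq_sub_one, Nat.reduceSub,
    Nat.reduceAdd, pow_zero, pow_one]
  ring



lemma fin4 : ∀ p : Fin 4, p = 0 ∨ p = 1 ∨ p = 2 ∨ p = 3 := by decide

lemma pd_eq_zero_of_const (f : (Fin 4 → ℝ) → ℝ) (c : ℝ) (hf : ∀ y, f y = c)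
    (i : Fin 4) (x : Fin 4 → ℝ) : pd i f x = 0 := by
  have : f = fun _ => c := funext hf
  rw [this]; exact pd_const i c x

lemma pd_gT (r0 L0 : ℝ) (ξ h : ℝ → ℝ) (hξ : ContDiff ℝ ∞ ξ) (hh : ContDiff ℝ ∞ h)
    (x : Fin 4 → ℝ) (i p q : Fin 4) :
    pd i (fun y => gT r0 L0 ξ h y p q) x =
      if p = 0 ∧ q = 0 ∧ i = 1 then -(r0 ^ 2 / L0) * (2 * ξ (x 1) * deriv ξ (x 1))
      else if p = 3 ∧ q = 3 ∧ i = 2 then r0 ^ 2 * (2 * h (x 2) * deriv h (x 2))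
      else 0 := by
  have e00 : (fun y : Fin 4 → ℝ => gT r0 L0 ξ h y 0 0)
      = fun y => (fun u => -(r0 ^ 2 / L0) * ξ u ^ 2) (y 1) := rfl
  have e33 : (fun y : Fin 4 → ℝ => gT r0 L0 ξ h y 3 3)
      = fun y => (fun u => r0 ^ 2 * h u ^ 2) (y 2) := rfl
  rcases fin4 p with rfl | rfl | rfl | rfl <;> rcases fin4 q with rfl | rfl | rfl | rfl <;>
    first
      | (rw [e00, pd_comp i 1 (fun u => -(r0 ^ 2 / L0) * ξ u ^ 2) x]
         rcases eq_or_ne i 1 with rfl | hi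
         · simp [deriv_sq _ hξ]
         · simp [hi])
      | (rw [e33, pd_comp i 2 (fun u => r0 ^ 2 * h u ^ 2) x]
         rcases eq_or_ne i 2 with rfl | hi
         · simp [deriv_sq _ hh]
         · simp [hi])
      | (simp only [Fin.reduceEq, false_and, and_false, if_false]
         exact pd_eq_zero_of_const _ _ (fun _ => rfl) i x)

def ChrV (r0 L0 : ℝ) (ξ h : ℝ → ℝ) (x : Fin 4 → ℝ) (a b c : Fin 4) : ℝ :=
  if a = 0 ∧ (b = 0 ∧ c = 1 ∨ b = 1 ∧ c = 0) then deriv ξ (x 1) / ξ (x 1)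
  else if a = 1 ∧ b = 0 ∧ c = 0 then ξ (x 1) * deriv ξ (x 1)
  else if a = 3 ∧ (b = 2 ∧ c = 3 ∨ b = 3 ∧ c = 2) then deriv h (x 2) / h (x 2)
  else if a = 2 ∧ b = 3 ∧ c = 3 then -(h (x 2) * deriv h (x 2))
  else 0



set_option maxHeartbeats 2000000 in
lemma Chr_eq (r0 L0 : ℝ) (ξ h : ℝ → ℝ) (hξ : ContDiff ℝ ∞ ξ) (hh : ContDiff ℝ ∞ h)
    (hr0 : r0 ≠ 0) (hL0 : L0 ≠ 0) (x : Fin 4 → ℝ)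
    (hX : ξ (x 1) ≠ 0) (hH : h (x 2) ≠ 0) (a b c : Fin 4) :
    Chr (gT r0 L0 ξ h) x a b c = ChrV r0 L0 ξ h x a b c := by
  rcases fin4 a with rfl | rfl | rfl | rfl <;>
    rcases fin4 b with rfl | rfl | rfl | rfl <;>
      rcases fin4 c with rfl | rfl | rfl | rfl <;>
        (simp only [Chr, Fin.sum_univ_four]
         simp only [pd_gT r0 L0 ξ h hξ hh x]
         simp (config := { decide := true }) only [ginv, gT, ChrV, Fin.reduceEq, reduceIte,
           and_self, and_true, true_and, false_and, and_false, true_or, or_true, false_or,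
           or_false, if_true, if_false, mul_zero, zero_mul, add_zero, zero_add, sub_zero,
           zero_sub, neg_zero, neg_neg, sub_self]) <;>
        (try norm_num) <;> field_simp <;> ring

def eps (a b : Fin 4) : Fin 4 → Fin 4 → ℝ := fun p q =>
  if p = a ∧ q = b then (1 : ℝ) else if p = b ∧ q = a then -1 else 0

lemma blk_eps (a b p q r s : Fin 4) : blk a b p q r s = eps a b p q * eps a b r s := rfl

lemma pd_eq_zero (i : Fin 4) (x : Fin 4 → ℝ) (f : (Fin 4 → ℝ) → ℝ)
    (hf : ∀ s, f (Function.update x i s) = f x) : pd i f x = 0 := by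
  unfold pd
  rw [show (fun s => f (Function.update x i s)) = fun _ => f x from funext hf, deriv_const]

lemma pd_two (a : Fin 4) (A B : ℝ → ℝ) (hA : ContDiff ℝ ∞ A) (hB : ContDiff ℝ ∞ B)
    (c1 c2 : ℝ) (x : Fin 4 → ℝ) :
    pd a (fun y => A (y 1) * c1 + B (y 2) * c2) x
      = (if a = 1 then deriv A (x 1) else 0) * c1
        + (if a = 2 then deriv B (x 2) else 0) * c2 := by
  rcases fin4 a with rfl | rfl | rfl | rfl
  · rw [pd_eq_zero _ _ _ (fun s => by
      rw [Function.update_of_ne (by decide), Function.update_of_ne (by decide)])]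
    simp (config := { decide := true })
  · unfold pd
    have e : (fun s => A (Function.update x 1 s 1) * c1 + B (Function.update x 1 s 2) * c2)
        = fun s => A s * c1 + (B (x 2) * c2) := by
      funext s; rw [Function.update_self, Function.update_of_ne (by decide)]
    rw [e, deriv_add_const, deriv_mul_const (smooth_diff hA (x 1))]
    simp (config := { decide := true })
  · unfold pd
    have e : (fun s => A (Function.update x 2 s 1) * c1 + B (Function.update x 2 s 2) * c2)
        = fun s => (A (x 1) * c1) + B s * c2 := by
      funext s; rw [Function.update_self, Function.update_of_ne (by decide)]
    rw [e, deriv_const_add, deriv_mul_const (smooth_diff hB (x 2))]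
    simp (config := { decide := true })
  · rw [pd_eq_zero _ _ _ (fun s => by
      rw [Function.update_of_ne (by decide), Function.update_of_ne (by decide)])]
    simp (config := { decide := true })

lemma deriv_AF (r0 L0 : ℝ) (ξ : ℝ → ℝ) (hξ : ContDiff ℝ ∞ ξ) (t : ℝ) :
    deriv (fun u => -(r0 ^ 2 / L0) * ξ u * deriv (deriv ξ) u) t
      = -(r0 ^ 2 / L0) * (deriv ξ t * deriv (deriv ξ) t + ξ t * deriv (deriv (deriv ξ)) t) := by
  have h1 : (fun u => -(r0 ^ 2 / L0) * ξ u * deriv (deriv ξ) u)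
      = fun u => -(r0 ^ 2 / L0) * (ξ u * deriv (deriv ξ) u) := by funext u; ring
  rw [h1, deriv_const_mul (d := fun u => ξ u * deriv (deriv ξ) u) _ ((smooth_diff hξ t).mul (smooth_diff (smooth_deriv (smooth_deriv hξ)) t)),
    deriv_fun_mul (smooth_diff hξ t) (smooth_diff (smooth_deriv (smooth_deriv hξ)) t)]

lemma deriv_BF (r0 : ℝ) (h : ℝ → ℝ) (hh : ContDiff ℝ ∞ h) (t : ℝ) :
    deriv (fun u => r0 ^ 2 * h u * deriv (deriv h) u) t
      = r0 ^ 2 * (deriv h t * deriv (deriv h) t + h t * deriv (deriv (deriv h)) t) := by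
  have h1 : (fun u => r0 ^ 2 * h u * deriv (deriv h) u)
      = fun u => r0 ^ 2 * (h u * deriv (deriv h) u) := by funext u; ring
  rw [h1, deriv_const_mul (d := fun u => h u * deriv (deriv h) u) _ ((smooth_diff hh t).mul (smooth_diff (smooth_deriv (smooth_deriv hh)) t)),
    deriv_fun_mul (smooth_diff hh t) (smooth_diff (smooth_deriv (smooth_deriv hh)) t)]

lemma pd_RT (r0 L0 : ℝ) (ξ h : ℝ → ℝ) (hξ : ContDiff ℝ ∞ ξ) (hh : ContDiff ℝ ∞ h)
    (x : Fin 4 → ℝ) (a p q r s : Fin 4) :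
    pd a (fun y => RT r0 L0 ξ h y p q r s) x
      = (if a = 1 then
          -(r0 ^ 2 / L0) * (deriv ξ (x 1) * deriv (deriv ξ) (x 1)
            + ξ (x 1) * deriv (deriv (deriv ξ)) (x 1)) else 0) * blk 0 1 p q r s
        + (if a = 2 then
          r0 ^ 2 * (deriv h (x 2) * deriv (deriv h) (x 2)
            + h (x 2) * deriv (deriv (deriv h)) (x 2)) else 0) * blk 2 3 p q r s := by
  have hA : ContDiff ℝ ∞ (fun u => -(r0 ^ 2 / L0) * ξ u * deriv (deriv ξ) u) :=
    (contDiff_const.mul hξ).mul (smooth_deriv (smooth_deriv hξ))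
  have hB : ContDiff ℝ ∞ (fun u => r0 ^ 2 * h u * deriv (deriv h) u) :=
    (contDiff_const.mul hh).mul (smooth_deriv (smooth_deriv hh))
  have e : (fun y => RT r0 L0 ξ h y p q r s)
      = fun y => (fun u => -(r0 ^ 2 / L0) * ξ u * deriv (deriv ξ) u) (y 1) * blk 0 1 p q r s
        + (fun u => r0 ^ 2 * h u * deriv (deriv h) u) (y 2) * blk 2 3 p q r s := rfl
  rw [e, pd_two a _ _ hA hB _ _ x, deriv_AF r0 L0 ξ hξ, deriv_BF r0 h hh]

set_option maxHeartbeats 2000000 in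
lemma KA (r0 L0 : ℝ) (ξ h : ℝ → ℝ) (x : Fin 4 → ℝ)
    (hX : ξ (x 1) ≠ 0) (a u v : Fin 4) :
    (1/2) * (if a = 1 then -(r0 ^ 2 / L0) * (deriv ξ (x 1) * deriv (deriv ξ) (x 1)
        + ξ (x 1) * (deriv ξ (x 1) * deriv (deriv ξ) (x 1) / ξ (x 1))) else 0) * eps 0 1 u v
      - (∑ e : Fin 4, ChrV r0 L0 ξ h x e a u
          * (-(r0 ^ 2 / L0) * ξ (x 1) * deriv (deriv ξ) (x 1)) * eps 0 1 e v)
      - (∑ e : Fin 4, ChrV r0 L0 ξ h x e a v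
          * (-(r0 ^ 2 / L0) * ξ (x 1) * deriv (deriv ξ) (x 1)) * eps 0 1 u e) = 0 := by
  rcases fin4 a with rfl | rfl | rfl | rfl <;>
    rcases fin4 u with rfl | rfl | rfl | rfl <;>
      rcases fin4 v with rfl | rfl | rfl | rfl <;>
        simp (config := { decide := true }) only [ChrV, eps, Fin.sum_univ_four, Fin.reduceEq,
          reduceIte, and_self, and_true, true_and, false_and, and_false, true_or, or_true,
          false_or, or_false, if_true, if_false, mul_zero, zero_mul, mul_one, mul_neg_one,
          add_zero, zero_add, sub_zero, zero_sub, neg_zero, neg_neg, sub_self] <;>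
        (try field_simp) <;> (try ring) <;>
        (try (rw [mul_inv_cancel_right₀ hX]; ring)) <;>
        (try (rw [mul_inv_cancel_right₀ hH]; ring))

set_option maxHeartbeats 2000000 in
lemma KB (r0 L0 : ℝ) (ξ h : ℝ → ℝ) (x : Fin 4 → ℝ)
    (hH : h (x 2) ≠ 0) (a u v : Fin 4) :
    (1/2) * (if a = 2 then r0 ^ 2 * (deriv h (x 2) * deriv (deriv h) (x 2)
        + h (x 2) * (deriv h (x 2) * deriv (deriv h) (x 2) / h (x 2))) else 0) * eps 2 3 u v
      - (∑ e : Fin 4, ChrV r0 L0 ξ h x e a u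
          * (r0 ^ 2 * h (x 2) * deriv (deriv h) (x 2)) * eps 2 3 e v)
      - (∑ e : Fin 4, ChrV r0 L0 ξ h x e a v
          * (r0 ^ 2 * h (x 2) * deriv (deriv h) (x 2)) * eps 2 3 u e) = 0 := by
  rcases fin4 a with rfl | rfl | rfl | rfl <;>
    rcases fin4 u with rfl | rfl | rfl | rfl <;>
      rcases fin4 v with rfl | rfl | rfl | rfl <;>
        simp (config := { decide := true }) only [ChrV, eps, Fin.sum_univ_four, Fin.reduceEq,
          reduceIte, and_self, and_true, true_and, false_and, and_false, true_or, or_true,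
          false_or, or_false, if_true, if_false, mul_zero, zero_mul, mul_one, mul_neg_one,
          add_zero, zero_add, sub_zero, zero_sub, neg_zero, neg_neg, sub_self] <;>
        (try field_simp) <;> (try ring) <;>
        (try (rw [mul_inv_cancel_right₀ hX]; ring)) <;>
        (try (rw [mul_inv_cancel_right₀ hH]; ring))


set_option maxHeartbeats 2000000 in
/-- If `ξ′ξ″ - ξξ‴ ≡ 0` and `h′h″ - hh‴ ≡ 0`, then the
charged-Nariai-type metric is locally symmetric: `∇R = 0`. -/
theorem cnt_locally_symmetric (r0 L0 : ℝ) (ξ h : ℝ → ℝ)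
    (hr0 : 0 < r0) (hL0 : 0 < L0) (hL1 : L0 ≤ 1)
    (hξ : ContDiff ℝ (⊤ : ℕ∞) ξ) (hξ0 : ∀ t : ℝ, ξ t ≠ 0)
    (hh : ContDiff ℝ (⊤ : ℕ∞) h) (hh0 : ∀ t : ℝ, h t ≠ 0)
    (hωξ : ∀ t : ℝ, omg ξ t = 0) (hωh : ∀ t : ℝ, omg h t = 0) :
    ∀ (x : Fin 4 → ℝ) (a p q r s : Fin 4),
      covDeriv4 (gT r0 L0 ξ h) (RT r0 L0 ξ h) x a p q r s = 0 := by
  intro x a p q r s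
  have hξ' : ContDiff ℝ ∞ ξ := hξ.of_le (by simp)
  have hh' : ContDiff ℝ ∞ h := hh.of_le (by simp)
  have hX := hξ0 (x 1)
  have hH := hh0 (x 2)
  have hr0' : r0 ≠ 0 := ne_of_gt hr0
  have hL0' : L0 ≠ 0 := ne_of_gt hL0
  have hX3 : deriv (deriv (deriv ξ)) (x 1)
      = deriv ξ (x 1) * deriv (deriv ξ) (x 1) / ξ (x 1) := by
    have hw := hωξ (x 1); unfold omg at hw; field_simp; linarith
  have hH3 : deriv (deriv (deriv h)) (x 2)
      = deriv h (x 2) * deriv (deriv h) (x 2) / h (x 2) := by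
    have hw := hωh (x 2); unfold omg at hw; field_simp; linarith
  unfold covDeriv4
  rw [pd_RT r0 L0 ξ h hξ' hh' x a p q r s, hX3, hH3]
  simp only [Chr_eq r0 L0 ξ h hξ' hh' hr0' hL0' x hX hH]
  simp only [RT, blk_eps]
  have hA1 := KA r0 L0 ξ h x hX a p q
  have hA2 := KA r0 L0 ξ h x hX a r s
  have hB1 := KB r0 L0 ξ h x hH a p q
  have hB2 := KB r0 L0 ξ h x hH a r s
  simp only [Fin.sum_univ_four] at hA1 hA2 hB1 hB2 ⊢
  linear_combination eps 0 1 r s * hA1 + eps 0 1 p q * hA2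
    + eps 2 3 r s * hB1 + eps 2 3 p q * hB2
end
end

section
/- At every point of the domain where L₀hξ″ − ξh″ ≠ 0, the charged-Nariai-type metric is 2-quasi-Einstein: the symmetric matrix (S_{pq} − α g_{pq}) with α = h″/(r₀²h) has rank exactly 2. -/
noncomputable section

open Real

/-- At every point where `L₀hξ″ - ξh″ ≠ 0`, the charged-Nariai-type
metric is 2-quasi-Einstein: the matrix `S - α g` with `α = h″/(r₀²h)` has rank 2. -/
theorem cnt_two_quasi_Einstein (r0 L0 : ℝ) (ξ h : ℝ → ℝ)
    (hr0 : 0 < r0) (hL0 : 0 < L0) (hL1 : L0 ≤ 1)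
    (hξ : ContDiff ℝ (⊤ : ℕ∞) ξ) (hξ0 : ∀ t : ℝ, ξ t ≠ 0)
    (hh : ContDiff ℝ (⊤ : ℕ∞) h) (hh0 : ∀ t : ℝ, h t ≠ 0)
    (x : Fin 4 → ℝ) (hΩ : ΩT L0 ξ h x ≠ 0) :
    (Matrix.of fun p q : Fin 4 =>
      SRicT ξ h x p q
        - (deriv (deriv h) (x 2) / (r0 ^ 2 * h (x 2))) * gT r0 L0 ξ h x p q).rank = 2 := by
  have hr : (r0:ℝ) ≠ 0 := ne_of_gt hr0
  have hL : L0 ≠ 0 := ne_of_gt hL0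
  have hx1 : ξ (x 1) ≠ 0 := hξ0 _
  have hh1 : h (x 2) ≠ 0 := hh0 _
  have hΩ' : L0 * h (x 2) * deriv (deriv ξ) (x 1) - ξ (x 1) * deriv (deriv h) (x 2) ≠ 0 := hΩ
  set Ω := L0 * h (x 2) * deriv (deriv ξ) (x 1) - ξ (x 1) * deriv (deriv h) (x 2) with hΩdef
  have hM : (Matrix.of fun p q : Fin 4 =>
      SRicT ξ h x p q
        - (deriv (deriv h) (x 2) / (r0 ^ 2 * h (x 2))) * gT r0 L0 ξ h x p q)
      = Matrix.diagonal ![-(ξ (x 1) / (L0 * h (x 2))) * Ω, Ω / (L0 * ξ (x 1) * h (x 2)), 0, 0] := by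
    ext p q
    fin_cases p <;> fin_cases q <;>
      simp [SRicT, gT, Matrix.diagonal, hΩdef] <;> field_simp <;> ring
  rw [hM, Matrix.rank_diagonal]
  have hd0 : (-(ξ (x 1) / (L0 * h (x 2))) * Ω) ≠ 0 := by
    apply mul_ne_zero _ hΩ'
    simp [div_ne_zero, hx1, hL, hh1]
  have hd1 : (Ω / (L0 * ξ (x 1) * h (x 2))) ≠ 0 :=
    div_ne_zero hΩ' (by simp [hL, hx1, hh1])
  rw [Fintype.card_subtype]
  have hset : (Finset.univ.filter
      (fun i => (![-(ξ (x 1) / (L0 * h (x 2))) * Ω, Ω / (L0 * ξ (x 1) * h (x 2)), 0, 0] : Fin 4 → ℝ) i ≠ 0))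
      = {0, 1} := by
    ext i
    fin_cases i <;> simp [hd0, hd1, hx1, hL, hh1, hΩ']
  rw [hset]
  rfl
end
end

section
/- The charged-Nariai-type metric is semisymmetric: R·R = 0 identically on its whole domain, for arbitrary smooth nowhere-vanishing ξ and h. -/
noncomputable section

open Real

/-- The elementary antisymmetric (0,2) factor of `blk`. -/
def ff (a b p q : Fin 4) : ℝ :=
  if p = a ∧ q = b then (1 : ℝ) else if p = b ∧ q = a then -1 else 0

lemma blk_eq_ff (a b p q r s : Fin 4) : blk a b p q r s = ff a b p q * ff a b r s := rfl

lemma ff01_anti (p q : Fin 4) : ff 0 1 p q = - ff 0 1 q p := by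
  fin_cases p <;> fin_cases q <;> simp [ff]

lemma ff23_anti (p q : Fin 4) : ff 2 3 p q = - ff 2 3 q p := by
  fin_cases p <;> fin_cases q <;> simp [ff]

lemma ff_cross (x y α : Fin 4) : ff 0 1 x α * ff 2 3 y α = 0 := by
  fin_cases α <;> simp [ff]

lemma summand_zero (A B : ℝ) (α p q r s u v : Fin 4) :
    (A * blk 0 1 u v p α + B * blk 2 3 u v p α) * (A * blk 0 1 α q r s + B * blk 2 3 α q r s)
      + (A * blk 0 1 u v q α + B * blk 2 3 u v q α) * (A * blk 0 1 p α r s + B * blk 2 3 p α r s)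
      + (A * blk 0 1 u v r α + B * blk 2 3 u v r α) * (A * blk 0 1 p q α s + B * blk 2 3 p q α s)
      + (A * blk 0 1 u v s α + B * blk 2 3 u v s α) * (A * blk 0 1 p q r α + B * blk 2 3 p q r α)
      = 0 := by
  simp only [blk_eq_ff]
  rw [ff01_anti α q, ff23_anti α q, ff01_anti α s, ff23_anti α s]
  linear_combination
    (A*B*ff 2 3 u v*ff 0 1 r s - A*B*ff 0 1 u v*ff 2 3 r s) * ff_cross p q α
    + (A*B*ff 0 1 u v*ff 2 3 r s - A*B*ff 2 3 u v*ff 0 1 r s) * ff_cross q p α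
    + (A*B*ff 2 3 u v*ff 0 1 p q - A*B*ff 0 1 u v*ff 2 3 p q) * ff_cross r s α
    + (A*B*ff 0 1 u v*ff 2 3 p q - A*B*ff 2 3 u v*ff 0 1 p q) * ff_cross s r α

/-- The charged-Nariai-type metric is semisymmetric: `R·R = 0`
identically, for arbitrary smooth nowhere-vanishing `ξ` and `h`. -/
theorem cnt_semisymmetric (r0 L0 : ℝ) (ξ h : ℝ → ℝ)
    (hr0 : 0 < r0) (hL0 : 0 < L0) (hL1 : L0 ≤ 1)
    (hξ : ContDiff ℝ (⊤ : ℕ∞) ξ) (hξ0 : ∀ t : ℝ, ξ t ≠ 0)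
    (hh : ContDiff ℝ (⊤ : ℕ∞) h) (hh0 : ∀ t : ℝ, h t ≠ 0) :
    ∀ (x : Fin 4 → ℝ) (p q r s u v : Fin 4),
      dot4 (gT r0 L0 ξ h) (RT r0 L0 ξ h) (RT r0 L0 ξ h) x p q r s u v = 0 := by
  intro x p q r s u v
  unfold dot4
  rw [neg_eq_zero]
  apply Finset.sum_eq_zero
  intro α _
  rw [Finset.sum_eq_single α]
  · simp only [RT, summand_zero, mul_zero]
  · intro b _ hb
    simp only [ginv, if_neg (Ne.symm hb), zero_mul]
  · intro hα
    exact absurd (Finset.mem_univ α) hα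
end
end
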